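/- arXiv:2012.06066 — 6 statements merged into one kernel-verified Lean document; each statement's English description precedes it below -/
import Mathlib

section
/- Let n = q·t + r with 0 ≤ r < t and t ≥ 1. For every finite simple graph G on n vertices, the number of maximal independent sets of G of size exactly t is at most q^(t-r) · (q+1)^r. -/
open Finset SimpleGraph

/-- A set of vertices is independent: pairwise nonadjacent. -/
def IndepOn {V : Type*} (G : SimpleGraph V) (S : Set V) : Prop :=
  S.Pairwise fun a b => ¬ G.Adj a b

/-- A maximal independent set (as a finset): independent and not properly
contained in any other independent set. -/
def MaxIndep {V : Type*} (G : SimpleGraph V) (S : Finset V) : Prop :=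
  IndepOn G ↑S ∧ ∀ T : Finset V, IndepOn G ↑T → S ⊆ T → S = T

/-- A maximal clique (as a finset): a clique not properly contained in any other clique. -/
def MaxClique {V : Type*} (G : SimpleGraph V) (S : Finset V) : Prop :=
  G.IsClique ↑S ∧ ∀ T : Finset V, G.IsClique ↑T → S ⊆ T → S = T


namespace Byskov

/-- balanced product: with n = q*t + r, q^(t-r)*(q+1)^r -/
def g (t n : ℕ) : ℕ := (n / t) ^ (t - n % t) * (n / t + 1) ^ (n % t)

lemma g_zero (t : ℕ) (ht : 1 ≤ t) : g t 0 = 0 := by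
  have : (0:ℕ) ^ t = 0 := zero_pow (by omega)
  simp [g, Nat.zero_div, Nat.zero_mod, this]

lemma g_one (n : ℕ) : g 1 n = n := by
  simp [g, Nat.div_one, Nat.mod_one]

lemma g_step (t m : ℕ) (ht : 1 ≤ t) :
    (m / t + 1) * g t m = (m / t) * g t (m + 1) := by
  have hRt : m % t < t := Nat.mod_lt _ ht
  have hm : m = t * (m / t) + m % t := (Nat.div_add_mod m t).symm
  set Q := m / t with hQ
  set R := m % t with hR
  have hm1 : m + 1 = t * Q + (R + 1) := by omega
  by_cases h : R + 1 < t
  · have hdiv : (m + 1) / t = Q := by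
      rw [hm1, Nat.mul_add_div (by omega), Nat.div_eq_of_lt h, Nat.add_zero]
    have hmod : (m + 1) % t = R + 1 := by
      rw [hm1, Nat.mul_add_mod, Nat.mod_eq_of_lt h]
    rw [g, g, hdiv, hmod, ← hQ, ← hR]
    have h2 : t - R = (t - (R + 1)) + 1 := by omega
    rw [h2, pow_succ, pow_succ]
    ring
  · have hR1 : R + 1 = t := by omega
    have hdiv : (m + 1) / t = Q + 1 := by
      rw [hm1, Nat.mul_add_div (by omega), hR1, Nat.div_self (by omega)]
    have hmod : (m + 1) % t = 0 := by
      rw [hm1, Nat.mul_add_mod, hR1, Nat.mod_self]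
    rw [g, g, hdiv, hmod, ← hQ, ← hR]
    have h2 : t - R = 1 := by omega
    rw [h2, Nat.sub_zero, pow_zero, pow_one, ← hR1, pow_succ]
    ring

lemma g_mono_step (t m : ℕ) (ht : 1 ≤ t) : g t m ≤ g t (m + 1) := by
  have h := g_step t m ht
  have h2 : (m / t + 1) * g t m ≤ (m / t + 1) * g t (m + 1) := by
    rw [g_step t m ht]; exact Nat.mul_le_mul_right _ (Nat.le_succ _)
  exact Nat.le_of_mul_le_mul_left h2 (Nat.succ_pos _)

lemma g_mono (t : ℕ) (ht : 1 ≤ t) : Monotone (g t) :=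
  monotone_nat_of_le_succ fun m => g_mono_step t m ht

lemma g_up (t m s : ℕ) (ht : 1 ≤ t) (h : s ≤ m / t) :
    s * g t (m + 1) ≤ (s + 1) * g t m := by
  refine Nat.le_of_mul_le_mul_left (c := m / t + 1) ?_ (Nat.succ_pos _)
  calc (m / t + 1) * (s * g t (m + 1)) = (s * (m / t + 1)) * g t (m + 1) := by ring
    _ ≤ ((s + 1) * (m / t)) * g t (m + 1) := by
        apply Nat.mul_le_mul_right
        rw [Nat.mul_add, Nat.add_mul, Nat.mul_one, Nat.one_mul]
        exact Nat.add_le_add_left h _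
    _ = (s + 1) * ((m / t) * g t (m + 1)) := by ring
    _ = (s + 1) * ((m / t + 1) * g t m) := by rw [← g_step t m ht]
    _ = (m / t + 1) * ((s + 1) * g t m) := by ring

lemma g_down (t m s : ℕ) (ht : 1 ≤ t) (h : m / t ≤ s) :
    (s + 1) * g t m ≤ s * g t (m + 1) := by
  refine Nat.le_of_mul_le_mul_left (c := m / t + 1) ?_ (Nat.succ_pos _)
  calc (m / t + 1) * ((s + 1) * g t m) = (s + 1) * ((m / t + 1) * g t m) := by ring
    _ = (s + 1) * ((m / t) * g t (m + 1)) := by rw [g_step t m ht]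
    _ = ((s + 1) * (m / t)) * g t (m + 1) := by ring
    _ ≤ (s * (m / t + 1)) * g t (m + 1) := by
        apply Nat.mul_le_mul_right
        rw [Nat.mul_add, Nat.add_mul, Nat.mul_one, Nat.one_mul]
        exact Nat.add_le_add_left h _
    _ = (m / t + 1) * (s * g t (m + 1)) := by ring


lemma key (t n s : ℕ) (ht : 1 ≤ t) (_hs : s ≤ n) :
    s * g t (n - s) ≤ g (t + 1) n := by
  set q := n / (t + 1) with hq
  set r := n % (t + 1) with hr
  have hrt : r < t + 1 := Nat.mod_lt _ (by omega)
  have hn : n = (t + 1) * q + r := (Nat.div_add_mod n (t + 1)).symm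
  set ss := if r = 0 then q else q + 1 with hss
  have hq_le : q ≤ (t + 1) * q := Nat.le_mul_of_pos_left q (by omega)
  have hssn : ss ≤ n := by
    by_cases h0 : r = 0 <;> simp only [hss, h0, if_true, if_false] <;> omega
  have hkey : g (t + 1) n = ss * g t (n - ss) := by
    by_cases h0 : r = 0
    · have hns : n - ss = t * q := by
        have h1 : (t + 1) * q = t * q + q := by ring
        simp only [hss, h0, if_true]
        omega
      have hd : (t * q) / t = q := Nat.mul_div_cancel_left q (by omega)
      have hm : (t * q) % t = 0 := Nat.mul_mod_right t q
      rw [hns, g, g, hd, hm, ← hq, ← hr, h0]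
      simp only [hss, h0, if_true, Nat.sub_zero, pow_zero, Nat.mul_one]
      rw [pow_succ]
      ring
    · have hns : n - ss = t * q + (r - 1) := by
        have h1 : (t + 1) * q = t * q + q := by ring
        simp only [hss, h0, if_false]
        omega
      have hd : (t * q + (r - 1)) / t = q := by
        rw [Nat.mul_add_div (by omega), Nat.div_eq_of_lt (by omega), Nat.add_zero]
      have hm : (t * q + (r - 1)) % t = r - 1 := by
        rw [Nat.mul_add_mod, Nat.mod_eq_of_lt (by omega)]
      rw [hns, g, g, hd, hm, ← hq, ← hr]
      simp only [hss, h0, if_false]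
      have he : t - (r - 1) = t + 1 - r := by omega
      have hpow : (q + 1) ^ (r - 1) * (q + 1) = (q + 1) ^ r := by
        rw [← pow_succ, Nat.sub_add_cancel (by omega)]
      rw [he, ← hpow]
      ring
  have chain_up : ∀ d : ℕ, ∀ s : ℕ, s + d = ss → s * g t (n - s) ≤ ss * g t (n - ss) := by
    intro d
    induction d with
    | zero => intro s h; rw [show s = ss by omega]
    | succ d ihd =>
      intro s h
      have hlt : s < ss := by omega
      have hs1n : s + 1 ≤ n := by omega
      have hcond : s ≤ (n - (s + 1)) / t := by
        rw [Nat.le_div_iff_mul_le (by omega)]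
        have hst : s * (t + 1) + 1 ≤ n := by
          by_cases h0 : r = 0
          · have hsq : s + 1 ≤ q := by
              simp only [hss, h0, if_true] at hlt; omega
            have h2 : (s + 1) * (t + 1) ≤ q * (t + 1) := Nat.mul_le_mul_right _ hsq
            have h3 : (s + 1) * (t + 1) = s * (t + 1) + t + 1 := by ring
            have h4 : q * (t + 1) = (t + 1) * q := by ring
            omega
          · have hsq : s ≤ q := by
              simp only [hss, h0, if_false] at hlt; omega
            have h2 : s * (t + 1) ≤ q * (t + 1) := Nat.mul_le_mul_right _ hsq
            have h4 : q * (t + 1) = (t + 1) * q := by ring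
            omega
        have h6 : s * (t + 1) = s * t + s := by ring
        omega
      have hup := g_up t (n - (s + 1)) s ht hcond
      rw [show n - (s + 1) + 1 = n - s by omega] at hup
      exact hup.trans (ihd (s + 1) (by omega))
  have chain_down : ∀ d : ℕ, (ss + d) * g t (n - (ss + d)) ≤ ss * g t (n - ss) := by
    intro d
    induction d with
    | zero => simp
    | succ d ihd =>
      by_cases hsn : n ≤ ss + d
      · rw [show n - (ss + (d + 1)) = 0 by omega, g_zero t ht, Nat.mul_zero]
        exact Nat.zero_le _
      · have hqss : q ≤ ss := by
          by_cases h0 : r = 0 <;> simp only [hss, h0, if_true, if_false] <;> omega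
        have hcond : (n - (ss + d + 1)) / t ≤ ss + d := by
          rw [← Nat.lt_succ_iff, Nat.div_lt_iff_lt_mul (by omega), Nat.succ_eq_add_one]
          have h1 : n < (q + 1) * (t + 1) := by
            have : (q + 1) * (t + 1) = (t + 1) * q + t + 1 := by ring
            omega
          have h2 : (q + 1) * (t + 1) ≤ (ss + d + 1) * (t + 1) :=
            Nat.mul_le_mul_right _ (by omega)
          have h3 : (ss + d + 1) * (t + 1) = (ss + d + 1) * t + ss + d + 1 := by ring
          omega
        have hdn := g_down t (n - (ss + d + 1)) (ss + d) ht hcond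
        rw [show n - (ss + d + 1) + 1 = n - (ss + d) by omega] at hdn
        calc (ss + (d + 1)) * g t (n - (ss + (d + 1)))
            = (ss + d + 1) * g t (n - (ss + d + 1)) := by rw [Nat.add_succ]
          _ ≤ (ss + d) * g t (n - (ss + d)) := hdn
          _ ≤ ss * g t (n - ss) := ihd
  rw [hkey]
  rcases le_or_gt s ss with h | h
  · exact chain_up (ss - s) s (by omega)
  · have := chain_down (s - ss)
    rw [show ss + (s - ss) = s by omega] at this
    exact this

end Byskov
namespace Byskov

open scoped Classical

lemma indep_symm {V : Type*} (G : SimpleGraph V) :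
    Symmetric fun a b => ¬ G.Adj a b := fun _ _ h hadj => h hadj.symm

lemma maxIndep_dom {V : Type*} (G : SimpleGraph V) {S : Finset V}
    (hS : MaxIndep G S) (v : V) : ∃ u ∈ S, u = v ∨ G.Adj v u := by
  classical
  by_contra hcon
  push_neg at hcon
  have hv : v ∉ S := fun hv => (hcon v hv).1 rfl
  have hins : IndepOn G ↑(insert v S) := by
    haveI : Std.Symm (fun a b : V => ¬ G.Adj a b) := ⟨fun _ _ h => indep_symm G h⟩
    rw [Finset.coe_insert, IndepOn,
      Set.pairwise_insert_of_symm]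
    exact ⟨hS.1, fun b hb _ => (hcon b hb).2⟩
  have heq := hS.2 (insert v S) hins (Finset.subset_insert v S)
  have : v ∈ S := by rw [heq]; exact Finset.mem_insert_self v S
  exact hv this

universe uV

lemma restrict_bound {V : Type uV} [Fintype V] (G : SimpleGraph V) (t : ℕ) (u : V)
    (IH : ∀ (W : Type uV) [Fintype W] (H : SimpleGraph W),
      (univ.filter fun S : Finset W => MaxIndep H S ∧ S.card = t).card
        ≤ g t (Fintype.card W)) :
    (univ.filter fun S : Finset V => (MaxIndep G S ∧ S.card = t + 1) ∧ u ∈ S).card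
      ≤ g t (Fintype.card V - 1 - G.degree u) := by
  classical
  set A : Finset V := univ \ insert u (G.neighborFinset u) with hA
  have hmemA : ∀ x : V, x ∈ A ↔ (x ≠ u ∧ ¬ G.Adj u x) := by
    intro x
    simp [hA, mem_sdiff, mem_insert, mem_neighborFinset, not_or]
  -- the induced graph on A
  set G' : SimpleGraph {x // x ∈ A} := G.comap (Subtype.val) with hG'
  set Φ : Finset V → Finset {x // x ∈ A} := fun S => S.subtype (· ∈ A) with hΦ
  have hmemΦ : ∀ (S : Finset V) (a : {x // x ∈ A}), a ∈ Φ S ↔ ↑a ∈ S := by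
    intro S a; simp [hΦ, Finset.mem_subtype]
  -- basic facts about a good S
  have fact1 : ∀ S : Finset V, MaxIndep G S → u ∈ S → ∀ x ∈ S, x ≠ u → x ∈ A := by
    intro S hS hu x hx hne
    exact (hmemA x).mpr ⟨hne, hS.1 (by exact_mod_cast hu) (by exact_mod_cast hx) (Ne.symm hne)⟩
  have hmap : ∀ S : Finset V, MaxIndep G S → u ∈ S →
      (Φ S).map (Function.Embedding.subtype (· ∈ A)) = S.erase u := by
    intro S hS hu
    ext x
    simp only [Finset.mem_map, Function.Embedding.coe_subtype, Finset.mem_erase]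
    constructor
    · rintro ⟨a, ha, rfl⟩
      exact ⟨((hmemA a).mp a.2).1, (hmemΦ S a).mp ha⟩
    · rintro ⟨hne, hx⟩
      exact ⟨⟨x, fact1 S hS hu x hx hne⟩, (hmemΦ S _).mpr hx, rfl⟩
  have hgood : ∀ S : Finset V, MaxIndep G S → S.card = t + 1 → u ∈ S →
      MaxIndep G' (Φ S) ∧ (Φ S).card = t := by
    intro S hS hcard hu
    have hcardΦ : (Φ S).card = t := by
      have h1 := hmap S hS hu
      have h2 : ((Φ S).map (Function.Embedding.subtype (· ∈ A))).card = (Φ S).card :=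
        Finset.card_map _
      rw [h1] at h2
      rw [← h2, Finset.card_erase_of_mem hu, hcard]
      omega
    refine ⟨⟨?_, ?_⟩, hcardΦ⟩
    · -- independence
      intro a ha b hb hne hadj
      have ha' : (a : V) ∈ S := (hmemΦ S a).mp (by exact_mod_cast ha)
      have hb' : (b : V) ∈ S := (hmemΦ S b).mp (by exact_mod_cast hb)
      exact hS.1 (by exact_mod_cast ha') (by exact_mod_cast hb')
        (Subtype.coe_injective.ne hne) (by exact_mod_cast hadj)
    · -- maximality
      intro T' hT' hsub'
      set T : Finset V := insert u (T'.map (Function.Embedding.subtype (· ∈ A))) with hT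
      have hTind : IndepOn G ↑T := by
        haveI : Std.Symm (fun a b : V => ¬ G.Adj a b) := ⟨fun _ _ h => indep_symm G h⟩
        rw [hT, Finset.coe_insert, IndepOn,
          Set.pairwise_insert_of_symm]
        constructor
        · intro x hx y hy hne hadj
          simp only [Finset.coe_map, Set.mem_image, Finset.mem_coe,
            Function.Embedding.coe_subtype] at hx hy
          obtain ⟨a, ha, rfl⟩ := hx
          obtain ⟨b, hb, rfl⟩ := hy
          have hab : a ≠ b := fun h => hne (by rw [h])
          exact hT' (by exact_mod_cast ha) (by exact_mod_cast hb) hab hadj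
        · intro b hb _
          simp only [Finset.coe_map, Set.mem_image, Finset.mem_coe,
            Function.Embedding.coe_subtype] at hb
          obtain ⟨a, _, rfl⟩ := hb
          exact ((hmemA a).mp a.2).2
      have hST : S ⊆ T := by
        intro x hx
        by_cases hxu : x = u
        · rw [hT, hxu]; exact Finset.mem_insert_self u _
        · have hxA : x ∈ A := fact1 S hS hu x hx hxu
          have : (⟨x, hxA⟩ : {x // x ∈ A}) ∈ T' := hsub' ((hmemΦ S _).mpr hx)
          rw [hT]
          apply Finset.mem_insert_of_mem
          exact Finset.mem_map.mpr ⟨⟨x, hxA⟩, this, rfl⟩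
      have hSeqT : S = T := hS.2 T hTind hST
      apply Finset.Subset.antisymm hsub'
      intro a ha
      have : (a : V) ∈ T := by
        rw [hT]
        exact Finset.mem_insert_of_mem (Finset.mem_map.mpr ⟨a, ha, rfl⟩)
      rw [← hSeqT] at this
      exact (hmemΦ S a).mpr this
  -- injectivity and conclusion
  have hinj : Set.InjOn Φ ((univ.filter fun S : Finset V =>
      (MaxIndep G S ∧ S.card = t + 1) ∧ u ∈ S) : Finset (Finset V)) := by
    intro S1 h1 S2 h2 heq
    simp only [Finset.coe_filter, Set.mem_setOf_eq, Finset.mem_univ, true_and] at h1 h2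
    have e1 : S1 = insert u ((Φ S1).map (Function.Embedding.subtype (· ∈ A))) := by
      rw [hmap S1 h1.1.1 h1.2, Finset.insert_erase h1.2]
    have e2 : S2 = insert u ((Φ S2).map (Function.Embedding.subtype (· ∈ A))) := by
      rw [hmap S2 h2.1.1 h2.2, Finset.insert_erase h2.2]
    rw [e1, e2, heq]
  have hcardA : A.card = Fintype.card V - 1 - G.degree u := by
    rw [hA, Finset.card_sdiff_of_subset (Finset.subset_univ _), Finset.card_univ,
      Finset.card_insert_of_notMem (SimpleGraph.notMem_neighborFinset_self G u),
      SimpleGraph.card_neighborFinset_eq_degree]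
    omega
  calc (univ.filter fun S : Finset V => (MaxIndep G S ∧ S.card = t + 1) ∧ u ∈ S).card
      ≤ (univ.filter fun S' : Finset {x // x ∈ A} => MaxIndep G' S' ∧ S'.card = t).card := by
        apply Finset.card_le_card_of_injOn Φ _ hinj
        intro S hS
        simp only [Finset.mem_coe, Finset.mem_filter, Finset.mem_univ, true_and] at hS ⊢
        exact hgood S hS.1.1 hS.1.2 hS.2
    _ ≤ g t (Fintype.card {x // x ∈ A}) := IH _ G'
    _ = g t (Fintype.card V - 1 - G.degree u) := by rw [Fintype.card_coe, hcardA]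


lemma main (t : ℕ) (ht : 1 ≤ t) :
    ∀ (V : Type uV) [Fintype V] (G : SimpleGraph V),
      (univ.filter fun S : Finset V => MaxIndep G S ∧ S.card = t).card
        ≤ g t (Fintype.card V) := by
  induction t, ht using Nat.le_induction with
  | base =>
    intro V _ G
    have hsub : (univ.filter fun S : Finset V => MaxIndep G S ∧ S.card = 1)
        ⊆ univ.image (fun v : V => ({v} : Finset V)) := by
      intro S hS
      simp only [mem_filter, mem_univ, true_and] at hS
      obtain ⟨a, rfl⟩ := Finset.card_eq_one.mp hS.2
      exact Finset.mem_image.mpr ⟨a, mem_univ a, rfl⟩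
    calc (univ.filter fun S : Finset V => MaxIndep G S ∧ S.card = 1).card
        ≤ (univ.image (fun v : V => ({v} : Finset V))).card := Finset.card_le_card hsub
      _ ≤ (univ : Finset V).card := Finset.card_image_le
      _ = g 1 (Fintype.card V) := by rw [Finset.card_univ, g_one]
  | succ t ht IH =>
    intro V _ G
    by_cases hne : Nonempty V
    · haveI := hne
      obtain ⟨v, -, hv⟩ := Finset.exists_min_image (univ : Finset V) (fun x => G.degree x) (Finset.univ_nonempty)
      set Nv : Finset V := insert v (G.neighborFinset v) with hNv
      have hsub : (univ.filter fun S : Finset V => MaxIndep G S ∧ S.card = t + 1)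
          ⊆ Nv.biUnion (fun u => univ.filter fun S : Finset V =>
              (MaxIndep G S ∧ S.card = t + 1) ∧ u ∈ S) := by
        intro S hS
        have hS' := (Finset.mem_filter.mp hS).2
        obtain ⟨u, huS, hcase⟩ := maxIndep_dom G hS'.1 v
        refine Finset.mem_biUnion.mpr ⟨u, ?_, ?_⟩
        · rcases hcase with rfl | hadj
          · exact Finset.mem_insert_self _ _
          · exact Finset.mem_insert_of_mem ((SimpleGraph.mem_neighborFinset G v u).mpr hadj)
        · exact Finset.mem_filter.mpr ⟨Finset.mem_univ _, hS', huS⟩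
      have harg : Fintype.card V - 1 - G.degree v = Fintype.card V - (G.degree v + 1) := by
        omega
      calc (univ.filter fun S : Finset V => MaxIndep G S ∧ S.card = t + 1).card
          ≤ (Nv.biUnion (fun u => univ.filter fun S : Finset V =>
              (MaxIndep G S ∧ S.card = t + 1) ∧ u ∈ S)).card := Finset.card_le_card hsub
        _ ≤ ∑ u ∈ Nv, (univ.filter fun S : Finset V =>
              (MaxIndep G S ∧ S.card = t + 1) ∧ u ∈ S).card := Finset.card_biUnion_le
        _ ≤ ∑ _u ∈ Nv, g t (Fintype.card V - 1 - G.degree v) := by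
            apply Finset.sum_le_sum
            intro u _
            refine (restrict_bound G t u IH).trans (g_mono t ht ?_)
            have := hv u (Finset.mem_univ u)
            omega
        _ = Nv.card * g t (Fintype.card V - 1 - G.degree v) := by
            rw [Finset.sum_const, smul_eq_mul]
        _ = (G.degree v + 1) * g t (Fintype.card V - (G.degree v + 1)) := by
            rw [hNv, Finset.card_insert_of_notMem (SimpleGraph.notMem_neighborFinset_self G v),
              SimpleGraph.card_neighborFinset_eq_degree, harg]
        _ ≤ g (t + 1) (Fintype.card V) := key t (Fintype.card V) (G.degree v + 1) ht
            (by have := G.degree_lt_card_verts v; omega)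
    · rw [not_nonempty_iff] at hne
      have hempty : (univ.filter fun S : Finset V => MaxIndep G S ∧ S.card = t + 1) = ∅ := by
        apply Finset.filter_eq_empty_iff.mpr
        intro S _
        have : S = ∅ := Finset.eq_empty_of_isEmpty S
        rw [this]
        simp
      rw [hempty, Finset.card_empty]
      exact Nat.zero_le _

end Byskov

theorem stmt0 {V : Type*} [Fintype V] (G : SimpleGraph V) (n q t r : ℕ)
    (hcard : Fintype.card V = n) (hn : n = q * t + r) (hr : r < t) (ht : 1 ≤ t) :
    Nat.card {S : Finset V // MaxIndep G S ∧ S.card = t} ≤ q ^ (t - r) * (q + 1) ^ r := by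
  classical
  have hn' : n = t * q + r := by rw [hn]; ring
  have hdiv : n / t = q := by
    rw [hn', Nat.mul_add_div (by omega), Nat.div_eq_of_lt hr, Nat.add_zero]
  have hmod : n % t = r := by
    rw [hn', Nat.mul_add_mod, Nat.mod_eq_of_lt hr]
  have hcount : Nat.card {S : Finset V // MaxIndep G S ∧ S.card = t}
      = (univ.filter fun S : Finset V => MaxIndep G S ∧ S.card = t).card := by
    rw [Nat.card_eq_fintype_card, Fintype.card_subtype]
  rw [hcount]
  have := Byskov.main t ht V G
  rw [hcard] at this
  calc (univ.filter fun S : Finset V => MaxIndep G S ∧ S.card = t).card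
      ≤ Byskov.g t n := this
    _ = q ^ (t - r) * (q + 1) ^ r := by rw [Byskov.g, hdiv, hmod]
end

section
/- Let n = q·t + r with 0 ≤ r < t and t ≥ 1. For every finite simple graph G on n vertices, the number of maximal cliques of G of size exactly t is at most q^(t-r) · (q+1)^r. -/
open Finset SimpleGraph

def gBound (n t : ℕ) : ℕ := (n / t) ^ (t - n % t) * (n / t + 1) ^ (n % t)

lemma gBound_zero (n : ℕ) : gBound n 0 = 1 := by
  simp [gBound, Nat.mod_zero, Nat.div_zero]

lemma gBound_eq (n t q r : ℕ) (hr : r < t) (hn : n = t * q + r) :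
    gBound n t = q ^ (t - r) * (q + 1) ^ r := by
  have h1 : n / t = q := by
    rw [hn, Nat.mul_add_div (by omega), Nat.div_eq_of_lt hr]
    omega
  have h2 : n % t = r := by rw [hn, Nat.mul_add_mod, Nat.mod_eq_of_lt hr]
  rw [gBound, h1, h2]

/-- any product of t parts summing to n is at most gBound n t -/
lemma prodBound : ∀ (N : ℕ) (s : Multiset ℕ), (s.map (·^2)).sum ≤ N →
    s.prod ≤ gBound s.sum (Multiset.card s) := by
  intro N
  induction N using Nat.strong_induction_on with
  | _ N ih =>
    intro s hs
    by_cases hex : ∃ a ∈ s, ∃ b ∈ s.erase a, a + 2 ≤ b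
    · obtain ⟨a, ha, b, hb, hab⟩ := hex
      set u : Multiset ℕ := (s.erase a).erase b with hu
      have hsab : s = a ::ₘ b ::ₘ u := by
        rw [hu, Multiset.cons_erase hb, Multiset.cons_erase ha]
      set s' : Multiset ℕ := (a+1) ::ₘ (b-1) ::ₘ u with hs'
      obtain ⟨k, hk⟩ : ∃ k, b = a + 2 + k := ⟨b - (a+2), by omega⟩
      have hmeas : (s'.map (·^2)).sum < N := by
        have h1 : (s.map (·^2)).sum = a^2 + b^2 + (u.map (·^2)).sum := by
          rw [hsab]; simp only [Multiset.map_cons, Multiset.sum_cons]; ring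
        have h2 : (s'.map (·^2)).sum = (a+1)^2 + (b-1)^2 + (u.map (·^2)).sum := by
          rw [hs']; simp only [Multiset.map_cons, Multiset.sum_cons]; ring
        have : (a+1)^2 + (b-1)^2 < a^2 + b^2 := by
          subst hk
          have hb1 : a + 2 + k - 1 = a + 1 + k := by omega
          rw [hb1]; nlinarith
        omega
      have hsum : s'.sum = s.sum := by
        rw [hsab, hs']; simp only [Multiset.sum_cons]; omega
      have hcard : Multiset.card s' = Multiset.card s := by
        rw [hsab, hs']; simp
      have hprod : s.prod ≤ s'.prod := by
        rw [hsab, hs']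
        simp only [Multiset.prod_cons, ← mul_assoc]
        apply Nat.mul_le_mul_right
        subst hk
        have hb1 : a + 2 + k - 1 = a + 1 + k := by omega
        rw [hb1]; nlinarith
      calc s.prod ≤ s'.prod := hprod
        _ ≤ gBound s'.sum (Multiset.card s') := ih _ hmeas s' le_rfl
        _ = gBound s.sum (Multiset.card s) := by rw [hsum, hcard]
    · -- balanced case
      push_neg at hex
      rcases eq_or_ne s 0 with rfl | hs0
      · simp [gBound]
      · have hne : s.toFinset.Nonempty := by
          simp [Multiset.toFinset_nonempty, hs0]
        set m := s.toFinset.min' hne with hm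
        have hmmem : m ∈ s := by
          have := s.toFinset.min'_mem hne; simpa using this
        have hval : ∀ x ∈ s, x = m ∨ x = m + 1 := by
          intro x hx
          have h1 : m ≤ x := s.toFinset.min'_le x (by simpa using hx)
          rcases eq_or_ne x m with h | h
          · left; exact h
          · have hxe : x ∈ s.erase m := Multiset.mem_erase_of_ne h |>.mpr hx
            have := hex m hmmem x hxe
            omega
        set c := s.count m with hc
        have hc1 : 1 ≤ c := by rw [hc]; exact Multiset.one_le_count_iff_mem.mpr hmmem
        have hfil : s.filter (· = m) = Multiset.replicate c m := by
          rw [hc]; exact Multiset.filter_eq' s m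
        set d := Multiset.card (s.filter (fun x => ¬ x = m)) with hd
        have hfil2 : s.filter (fun x => ¬ x = m) = Multiset.replicate d (m+1) := by
          rw [Multiset.eq_replicate]
          refine ⟨hd.symm, ?_⟩
          intro b hb
          rw [Multiset.mem_filter] at hb
          rcases hval b hb.1 with h | h
          · exact absurd h hb.2
          · exact h
        have hsplit : s = Multiset.replicate c m + Multiset.replicate d (m+1) := by
          rw [← hfil, ← hfil2, Multiset.filter_add_not]
        have hcard : Multiset.card s = c + d := by rw [hsplit]; simp
        have hsum : s.sum = (c + d) * m + d := by
          rw [hsplit]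
          simp only [Multiset.sum_add, Multiset.sum_replicate, smul_eq_mul]
          ring
        have hprod : s.prod = m ^ c * (m+1) ^ d := by
          rw [hsplit]
          simp only [Multiset.prod_add, Multiset.prod_replicate]
        rw [hcard, hsum, hprod, gBound_eq _ _ m d (by omega) (by ring)]
        have : c + d - d = c := by omega
        rw [this]

lemma prodBound' (s : Multiset ℕ) : s.prod ≤ gBound s.sum (Multiset.card s) :=
  prodBound _ s le_rfl

/-- gBound is monotone in n -/
lemma gBound_mono {n n' : ℕ} (t : ℕ) (h : n ≤ n') : gBound n t ≤ gBound n' t := by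
  induction n' with
  | zero =>
    have : n = 0 := by omega
    subst this; exact le_rfl
  | succ n' ihn =>
    rcases Nat.lt_or_ge n (n'+1) with h' | h'
    · have step : gBound n' t ≤ gBound (n'+1) t := by
        rcases Nat.eq_zero_or_pos t with rfl | ht
        · simp [gBound_zero]
        · obtain ⟨q, r, hrt, hnqr⟩ : ∃ q r, r < t ∧ n' = t * q + r :=
            ⟨n' / t, n' % t, Nat.mod_lt _ ht, (Nat.div_add_mod n' t).symm⟩
          set s' : Multiset ℕ := Multiset.replicate (t - r - 1) q +
            Multiset.replicate (r + 1) (q + 1) with hs'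
          have hcard : Multiset.card s' = t := by rw [hs']; simp; omega
          have hsum : s'.sum = n' + 1 := by
            rw [hs']
            simp only [Multiset.sum_add, Multiset.sum_replicate, smul_eq_mul]
            have h1 : t - r - 1 = t - (r + 1) := by omega
            rw [h1, Nat.sub_mul, hnqr]
            have h2 : (r + 1) * q ≤ t * q := Nat.mul_le_mul_right _ (by omega)
            have h3 : (r+1) * (q+1) = (r+1)*q + (r+1) := by ring
            omega
          have hprod : gBound n' t ≤ s'.prod := by
            rw [hs', gBound_eq _ _ q r hrt hnqr]
            simp only [Multiset.prod_add, Multiset.prod_replicate]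
            have he : t - r = (t - r - 1) + 1 := by omega
            rw [he, pow_succ]
            calc q ^ (t - r - 1) * q * (q + 1) ^ r
                ≤ q ^ (t - r - 1) * (q+1) * (q + 1) ^ r := by
                  apply Nat.mul_le_mul_right
                  apply Nat.mul_le_mul_left
                  omega
              _ = q ^ (t - r - 1) * (q + 1) ^ (r + 1) := by ring
          calc gBound n' t ≤ s'.prod := hprod
            _ ≤ gBound s'.sum (Multiset.card s') := prodBound' s'
            _ = gBound (n'+1) t := by rw [hsum, hcard]
      exact le_trans (ihn (by omega)) step
    · have : n = n' + 1 := by omega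
      subst this; exact le_rfl

/-- key recursion inequality -/
lemma gBound_key (a m t : ℕ) (ha : 1 ≤ a) : a * gBound m t ≤ gBound (m + a) (t + 1) := by
  rcases Nat.eq_zero_or_pos t with rfl | ht
  · rw [gBound_zero, gBound_eq (m+a) 1 (m+a) 0 (by omega) (by omega)]
    simp only [pow_one, pow_zero, mul_one, Nat.sub_zero]
    omega
  · obtain ⟨q, r, hrt, hnqr⟩ : ∃ q r, r < t ∧ m = t * q + r :=
      ⟨m / t, m % t, Nat.mod_lt _ ht, (Nat.div_add_mod m t).symm⟩
    set s : Multiset ℕ := a ::ₘ (Multiset.replicate (t - r) q + Multiset.replicate r (q + 1))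
      with hs
    have hcard : Multiset.card s = t + 1 := by rw [hs]; simp; omega
    have hsum : s.sum = m + a := by
      rw [hs]
      simp only [Multiset.sum_cons, Multiset.sum_add, Multiset.sum_replicate, smul_eq_mul]
      rw [Nat.sub_mul, hnqr]
      have h2 : r * q ≤ t * q := Nat.mul_le_mul_right _ (by omega)
      have h3 : r * (q+1) = r*q + r := by ring
      omega
    have hprod : s.prod = a * gBound m t := by
      rw [hs, gBound_eq _ _ q r hrt hnqr]
      simp only [Multiset.prod_cons, Multiset.prod_add, Multiset.prod_replicate]
    calc a * gBound m t = s.prod := hprod.symm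
      _ ≤ gBound s.sum (Multiset.card s) := prodBound' s
      _ = gBound (m + a) (t + 1) := by rw [hsum, hcard]

universe u

lemma mainAux (t : ℕ) : ∀ (V : Type u) [Finite V] (G : SimpleGraph V),
    Nat.card {S : Finset V // MaxClique G S ∧ S.card = t} ≤ gBound (Nat.card V) t := by
  induction t with
  | zero =>
    intro V _ G
    classical
    cases nonempty_fintype V
    rw [Nat.card_eq_fintype_card, Fintype.card_subtype, gBound_zero]
    calc (univ.filter fun S : Finset V => MaxClique G S ∧ S.card = 0).card
        ≤ ({∅} : Finset (Finset V)).card := by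
          apply Finset.card_le_card
          intro S hS
          simp only [mem_filter] at hS
          simp [Finset.card_eq_zero.mp hS.2.2]
      _ = 1 := rfl
  | succ t ih =>
    intro V _ G
    classical
    cases nonempty_fintype V
    rw [Nat.card_eq_fintype_card, Fintype.card_subtype, Nat.card_eq_fintype_card]
    set n := Fintype.card V with hn
    set A : Finset (Finset V) :=
      univ.filter (fun S : Finset V => MaxClique G S ∧ S.card = t + 1) with hA
    rcases A.eq_empty_or_nonempty with hAe | hAne
    · rw [hAe]; simp
    · -- V nonempty
      obtain ⟨S₀, hS₀⟩ := hAne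
      have hS₀' : S₀.card = t + 1 := by
        simp only [hA, mem_filter] at hS₀; exact hS₀.2.2
      have hVne : Nonempty V := by
        obtain ⟨x, hx⟩ := Finset.card_pos.mp (by omega : 0 < S₀.card)
        exact ⟨x⟩
      set deg : V → ℕ := fun u => (univ.filter (fun w => G.Adj u w)).card with hdeg
      obtain ⟨v, -, hv⟩ := Finset.exists_max_image (univ : Finset V) deg
        ⟨Classical.arbitrary V, mem_univ _⟩
      have hv' : ∀ u : V, deg u ≤ deg v := fun u => hv u (mem_univ u)
      set M : Finset V := univ.filter (fun u => ¬ G.Adj v u) with hM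
      have hvM : v ∈ M := mem_filter.mpr ⟨mem_univ v, G.loopless.irrefl v⟩
      have hMcard : M.card = n - deg v := by
        have h1 : M = univ \ univ.filter (fun u => G.Adj v u) := by
          rw [hM, Finset.filter_not]
        rw [h1, Finset.card_sdiff_of_subset (Finset.filter_subset _ _), Finset.card_univ]
      -- choice of a vertex of S in M
      set ch : Finset V → V := fun S =>
        if h : (S ∩ M).Nonempty then h.choose else Classical.arbitrary V with hch
      have hchSM : ∀ S ∈ A, ch S ∈ S ∧ ch S ∈ M := by
        intro S hS
        simp only [hA, mem_filter] at hS
        have hSM : (S ∩ M).Nonempty := by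
          by_contra hcon
          have hadj : ∀ u ∈ S, G.Adj v u := by
            intro u hu
            by_contra hnadj
            exact hcon ⟨u, mem_inter.mpr ⟨hu, mem_filter.mpr ⟨mem_univ _, hnadj⟩⟩⟩
          have hvS : v ∉ S := fun h => G.loopless.irrefl v (hadj v h)
          have hclq : G.IsClique ↑(insert v S) := by
            rw [Finset.coe_insert]
            exact hS.2.1.1.insert (fun u hu _ => hadj u hu)
          have heq := hS.2.1.2 (insert v S) hclq (Finset.subset_insert _ _)
          exact hvS (by rw [heq]; exact Finset.mem_insert_self v S)
        have : ch S ∈ S ∩ M := by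
          rw [hch]; simp only [dif_pos hSM]; exact hSM.choose_spec
        exact ⟨(mem_inter.mp this).1, (mem_inter.mp this).2⟩
      have hfib := Finset.card_eq_sum_card_fiberwise (fun S hS => (hchSM S hS).2)
      rw [hfib]
      -- bound each fiber
      have hfiber : ∀ u ∈ M, (A.filter fun S => ch S = u).card ≤ gBound (deg v) t := by
        intro u hu
        set Nu : Set V := G.neighborSet u with hNu
        set Cu : Finset (Finset ↥Nu) := univ.filter
          (fun T : Finset ↥Nu => MaxClique (G.induce Nu) T ∧ T.card = t) with hCu
        set ι : Finset V → Finset ↥Nu := fun S => (S.erase u).subtype (· ∈ Nu) with hι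
        have hmem : ∀ S ∈ A.filter (fun S => ch S = u),
            u ∈ S ∧ MaxClique G S ∧ S.card = t + 1 := by
          intro S hS
          rw [mem_filter] at hS
          have h1 := (hchSM S hS.1).1
          rw [hS.2] at h1
          simp only [hA, mem_filter] at hS
          exact ⟨h1, hS.1.2.1, hS.1.2.2⟩
        have herasesub : ∀ S, u ∈ S → MaxClique G S → ∀ w ∈ S.erase u, w ∈ Nu := by
          intro S huS hmc w hw
          obtain ⟨hwne, hwS⟩ := Finset.mem_erase.mp hw
          exact hmc.1 (by exact_mod_cast huS) (by exact_mod_cast hwS) (Ne.symm hwne)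
        have hmapval : ∀ S, u ∈ S → MaxClique G S →
            (ι S).map (Function.Embedding.subtype _) = S.erase u := by
          intro S huS hmc
          rw [hι]
          exact Finset.subtype_map_of_mem (herasesub S huS hmc)
        -- maps into Cu
        have hmaps : ∀ S ∈ A.filter (fun S => ch S = u), ι S ∈ Cu := by
          intro S hS
          obtain ⟨huS, hmc, hcard⟩ := hmem S hS
          rw [hCu, mem_filter]
          refine ⟨mem_univ _, ⟨?_, ?_⟩, ?_⟩
          · -- clique in induce
            intro x hx y hy hxy
            simp only [Finset.mem_coe, hι, Finset.mem_subtype] at hx hy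
            have hxv := (Finset.mem_erase.mp hx)
            have hyv := (Finset.mem_erase.mp hy)
            simp only [comap_adj, Function.Embedding.coe_subtype]
            exact hmc.1 (by exact_mod_cast hxv.2) (by exact_mod_cast hyv.2)
              (Subtype.coe_injective.ne hxy)
          · -- maximality
            intro T' hT' hsub
            set S' : Finset V := insert u (T'.map (Function.Embedding.subtype _)) with hS'
            have hT'nb : ∀ w ∈ T'.map (Function.Embedding.subtype _), w ∈ Nu := by
              intro w hw
              obtain ⟨x, _, hx⟩ := Finset.mem_map.mp hw
              rw [← hx]; exact x.2
            have hS'clique : G.IsClique ↑S' := by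
              rw [hS', Finset.coe_insert]
              refine SimpleGraph.IsClique.insert ?_ ?_
              · intro x hx y hy hxy
                simp only [Finset.mem_coe] at hx hy
                obtain ⟨a, ha, rfl⟩ := Finset.mem_map.mp hx
                obtain ⟨b, hb, rfl⟩ := Finset.mem_map.mp hy
                have := hT' (by exact_mod_cast ha) (by exact_mod_cast hb)
                  (fun h => hxy (by rw [h]))
                simpa using this
              · intro b hb _
                have := hT'nb b (by exact_mod_cast hb)
                exact this
            have hSsub : S ⊆ S' := by
              conv_lhs => rw [← Finset.insert_erase huS]
              rw [hS']
              apply Finset.insert_subset_insert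
              rw [← hmapval S huS hmc]
              exact Finset.map_subset_map.mpr hsub
            have heq := hmc.2 S' hS'clique hSsub
            -- now T' ⊆ ι S
            apply Finset.Subset.antisymm hsub
            intro x hx
            have hxS' : (x : V) ∈ S' := by
              rw [hS']
              exact Finset.mem_insert_of_mem (Finset.mem_map_of_mem _ hx)
            rw [← heq] at hxS'
            have hxu : (x : V) ≠ u := by
              intro h
              have := x.2
              rw [h] at this
              exact G.loopless.irrefl u this
            rw [hι, Finset.mem_subtype]
            exact Finset.mem_erase.mpr ⟨hxu, hxS'⟩
          · -- card
            have h1 : ((ι S).map (Function.Embedding.subtype _)).card = (S.erase u).card := by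
              rw [hmapval S huS hmc]
            rw [Finset.card_map] at h1
            rw [h1, Finset.card_erase_of_mem huS, hcard]
            omega
        -- injective
        have hinj : Set.InjOn ι (A.filter (fun S => ch S = u)) := by
          intro S₁ h₁ S₂ h₂ hi
          obtain ⟨hu₁, hmc₁, -⟩ := hmem S₁ h₁
          obtain ⟨hu₂, hmc₂, -⟩ := hmem S₂ h₂
          have := congrArg (fun T => T.map (Function.Embedding.subtype (· ∈ Nu))) hi
          rw [hmapval S₁ hu₁ hmc₁, hmapval S₂ hu₂ hmc₂] at this
          rw [← Finset.insert_erase hu₁, ← Finset.insert_erase hu₂, this]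
        calc (A.filter fun S => ch S = u).card ≤ Cu.card :=
              Finset.card_le_card_of_injOn ι hmaps hinj
          _ = Nat.card {T : Finset ↥Nu // MaxClique (G.induce Nu) T ∧ T.card = t} := by
              rw [Nat.card_eq_fintype_card, Fintype.card_subtype]
          _ ≤ gBound (Nat.card ↥Nu) t := ih ↥Nu (G.induce Nu)
          _ = gBound (deg u) t := by
              congr 1
              rw [Nat.card_eq_fintype_card, hdeg]
              simp only [Fintype.card_subtype]
              rfl
          _ ≤ gBound (deg v) t := gBound_mono t (hv' u)
      calc ∑ u ∈ M, (A.filter fun S => ch S = u).card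
          ≤ ∑ _u ∈ M, gBound (deg v) t := Finset.sum_le_sum hfiber
        _ = M.card * gBound (deg v) t := by rw [Finset.sum_const, smul_eq_mul]
        _ = (n - deg v) * gBound (deg v) t := by rw [hMcard]
        _ ≤ gBound (deg v + (n - deg v)) (t + 1) := by
            apply gBound_key
            have : deg v ≤ n - 1 := by
              have h1 : univ.filter (fun w => G.Adj v w) ⊆ univ.erase v := by
                intro w hw
                rw [mem_filter] at hw
                exact Finset.mem_erase.mpr ⟨fun h => G.loopless.irrefl v (h ▸ hw.2), mem_univ _⟩
              have h2 := Finset.card_le_card h1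
              rw [Finset.card_erase_of_mem (mem_univ v)] at h2
              exact h2
            have hn1 : 1 ≤ n := Fintype.card_pos
            omega
        _ = gBound n (t + 1) := by
            congr 1
            have : deg v ≤ n := by
              have := Finset.card_le_card (Finset.filter_subset (fun w => G.Adj v w) univ)
              exact this
            omega

theorem stmt2 {V : Type*} [Fintype V] (G : SimpleGraph V) (n q t r : ℕ)
    (hcard : Fintype.card V = n) (hn : n = q * t + r) (hr : r < t) (ht : 1 ≤ t) :
    Nat.card {S : Finset V // MaxClique G S ∧ S.card = t} ≤ q ^ (t - r) * (q + 1) ^ r := by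
  have h := mainAux t V G
  have hV : Nat.card V = n := by rw [Nat.card_eq_fintype_card, hcard]
  rw [hV, gBound_eq n t q r hr (by rw [hn]; ring)] at h
  exact h
end

section
/- Let G be a graph on n = q·t + r vertices with 0 < r < t. If the minimum degree of G satisfies δ(G) ≥ n - q, then every set of t vertices of G has a common neighbor, and consequently G has no maximal clique of size t. -/
/-! If `|S| · (n - δ(G)) < n`, the non-neighbourhoods of the vertices of `S`, each of size at most
`n - δ(G)`, cannot cover all `n` vertices; a vertex outside all of them is a common neighbour of `S`.
With `n = qt + r`, `r > 0` and `δ(G) ≥ n - q`, every `t`-set satisfies this, and a clique with a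
common neighbour extends to a larger clique. -/

open Finset SimpleGraph

namespace SimpleGraph

variable {V : Type*} [Fintype V] [DecidableEq V] (G : SimpleGraph V) [DecidableRel G.Adj]

theorem card_compl_neighborFinset_le (v : V) :
    #(G.neighborFinset v)ᶜ ≤ Fintype.card V - G.minDegree := by
  rw [card_compl, card_neighborFinset_eq_degree]
  exact Nat.sub_le_sub_left (G.minDegree_le_degree v) _

theorem exists_forall_adj_of_card_mul_lt (S : Finset V)
    (hS : #S * (Fintype.card V - G.minDegree) < Fintype.card V) :
    ∃ u, ∀ v ∈ S, G.Adj u v := by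
  by_contra! hnone
  have hcover : (univ : Finset V) ⊆ S.biUnion fun v => (G.neighborFinset v)ᶜ := fun u _ => by
    obtain ⟨v, hv, huv⟩ := hnone u
    exact mem_biUnion.2 ⟨v, hv, by simpa [G.adj_comm] using huv⟩
  have hle : Fintype.card V ≤ #S * (Fintype.card V - G.minDegree) :=
    calc Fintype.card V = #(univ : Finset V) := card_univ.symm
      _ ≤ #(S.biUnion fun v => (G.neighborFinset v)ᶜ) := card_le_card hcover
      _ ≤ ∑ v ∈ S, #(G.neighborFinset v)ᶜ := card_biUnion_le
      _ ≤ ∑ _v ∈ S, (Fintype.card V - G.minDegree) :=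
          sum_le_sum fun v _ => G.card_compl_neighborFinset_le v
      _ = #S * (Fintype.card V - G.minDegree) := by rw [sum_const, smul_eq_mul]
  omega

end SimpleGraph

theorem not_maxClique_of_forall_adj {V : Type*} [DecidableEq V] {G : SimpleGraph V}
    {S : Finset V} {u : V} (hu : ∀ v ∈ S, G.Adj u v) : ¬ MaxClique G S := by
  intro hmax
  have huS : u ∉ S := fun h => G.irrefl (hu u h)
  have hclique : G.IsClique ↑(insert u S) := by
    rw [coe_insert]
    exact hmax.1.insert fun v hv _ => hu v hv
  exact huS (hmax.2 _ hclique (subset_insert u S) ▸ mem_insert_self u S)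

theorem stmt4_general {V : Type*} [Fintype V] [DecidableEq V] (G : SimpleGraph V) [DecidableRel G.Adj]
    (n q t r : ℕ) (hcard : Fintype.card V = n) (hn : n = q * t + r) (hr0 : 0 < r)
    (hδ : n - q ≤ G.minDegree) :
    (∀ S : Finset V, S.card = t → ∃ u, ∀ v ∈ S, G.Adj u v) ∧
      ∀ S : Finset V, MaxClique G S → S.card ≠ t := by
  have hcommon : ∀ S : Finset V, S.card = t → ∃ u, ∀ v ∈ S, G.Adj u v := by
    intro S hS
    apply G.exists_forall_adj_of_card_mul_lt S
    have hnon : n - G.minDegree ≤ q := by omega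
    calc #S * (Fintype.card V - G.minDegree) ≤ t * q := by
          rw [hS, hcard]
          exact Nat.mul_le_mul_left t hnon
      _ < Fintype.card V := by rw [hcard, hn, mul_comm]; omega
  refine ⟨hcommon, fun S hmax hS => ?_⟩
  obtain ⟨u, hu⟩ := hcommon S hS
  exact not_maxClique_of_forall_adj hu hmax

theorem stmt4 {V : Type*} [Fintype V] [DecidableEq V] (G : SimpleGraph V) [DecidableRel G.Adj]
    (n q t r : ℕ) (hcard : Fintype.card V = n) (hn : n = q * t + r) (hr0 : 0 < r) (hr : r < t)
    (hδ : n - q ≤ G.minDegree) :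
    (∀ S : Finset V, S.card = t → ∃ u, ∀ v ∈ S, G.Adj u v) ∧
      ∀ S : Finset V, MaxClique G S → S.card ≠ t :=
  stmt4_general G n q t r hcard hn hr0 hδ
end

section
/- If n is divisible by 3, then for every graph G on n vertices the number of maximal independent sets of size n/3 is at most 3^(n/3). -/
open Finset SimpleGraph

namespace MoonMoser

/-- The Moon–Moser bound function: `c n` is an upper bound for the number of
maximal independent sets of a graph on `n` vertices, with `c (3k) = 3^k`. -/
def c : ℕ → ℕ
  | 0 => 1
  | 1 => 1
  | 2 => 2
  | 3 => 3
  | 4 => 4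
  | (n+5) => 3 * c (n+2)

theorem c_add3 : ∀ n, 3 * c n ≤ c (n+3)
  | 0 => by decide
  | 1 => by decide
  | (_+2) => le_of_eq rfl

theorem c_le_succ : ∀ n, c n ≤ c (n+1)
  | 0 => by decide
  | 1 => by decide
  | 2 => by decide
  | 3 => by decide
  | 4 => by decide
  | (n+5) => by
      have h : c (n+2) ≤ c (n+3) := c_le_succ (n+2)
      show 3 * c (n+2) ≤ 3 * c (n+3)
      omega

theorem c_mono : Monotone c := monotone_nat_of_le_succ c_le_succ

theorem two_c : ∀ m, 2 * c m ≤ c (m+2)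
  | 0 => by decide
  | 1 => by decide
  | 2 => by decide
  | 3 => by decide
  | 4 => by decide
  | (m+5) => by
      have h : 2 * c (m+2) ≤ c (m+4) := two_c (m+2)
      show 2 * (3 * c (m+2)) ≤ 3 * c (m+4)
      omega

theorem four_c : ∀ m, 4 * c m ≤ c (m+4)
  | 0 => by decide
  | 1 => by decide
  | 2 => by decide
  | 3 => by decide
  | 4 => by decide
  | (m+5) => by
      have h : 4 * c (m+2) ≤ c (m+6) := four_c (m+2)
      show 4 * (3 * c (m+2)) ≤ 3 * c (m+6)
      have : c (m+6) = 3 * c (m+3) := rfl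
      have h2 : c (m+3) ≤ c (m+4) := c_le_succ _
      omega

/-- The key recursive inequality for the Moon–Moser bound. -/
theorem c_key : ∀ d n, d < n → (d+1) * c (n - (d+1)) ≤ c n := by
  intro d
  induction d using Nat.strong_induction_on with
  | _ d ih =>
    intro n hdn
    match d, hdn with
    | 0, hdn => simpa using c_mono (Nat.sub_le n 1)
    | 1, hdn =>
        have h := two_c (n - 2)
        have h2 : n - 2 + 2 = n := by omega
        rw [h2] at h
        simpa using h
    | 2, hdn =>
        have h := c_add3 (n - 3)
        have h2 : n - 3 + 3 = n := by omega
        rw [h2] at h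
        simpa using h
    | 3, hdn =>
        have h := four_c (n - 4)
        have h2 : n - 4 + 4 = n := by omega
        rw [h2] at h
        simpa using h
    | (d+4), hdn =>
        have h1 : (d+4+1) ≤ 3 * (d+2) := by omega
        have h2 : 3 * c (n - (d+5)) ≤ c (n - (d+5) + 3) := c_add3 _
        have h3 : n - (d+5) + 3 = n - (d+2) := by omega
        rw [h3] at h2
        have h4 : (d+2) * c (n - (d+2)) ≤ c n := by
          have := ih (d+1) (by omega) n (by omega)
          simpa using this
        calc (d+4+1) * c (n - (d+4+1)) ≤ (3 * (d+2)) * c (n - (d+5)) :=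
              Nat.mul_le_mul_right _ h1
          _ = (d+2) * (3 * c (n - (d+5))) := by ring
          _ ≤ (d+2) * c (n - (d+2)) := Nat.mul_le_mul_left _ h2
          _ ≤ c n := h4

theorem c_three_mul : ∀ k, c (3 * k) = 3 ^ k
  | 0 => by decide
  | 1 => by decide
  | (k+2) => by
      have h := c_three_mul (k+1)
      have h1 : 3 * (k+2) = (3*k+1) + 5 := by ring
      rw [h1]
      show 3 * c (3*k+3) = 3 ^ (k+2)
      have h2 : 3*k+3 = 3*(k+1) := by ring
      rw [h2, h]
      ring

section
variable {V : Type*} [DecidableEq V] (G : SimpleGraph V) [DecidableRel G.Adj]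

/-- Closed neighborhood of `v` inside `A`. -/
def NA (A : Finset V) (v : V) : Finset V := insert v (A.filter (G.Adj v))

/-- `S` is a maximal independent subset of `A`. -/
def MI (A S : Finset V) : Prop :=
  S ⊆ A ∧ IndepOn G ↑S ∧ ∀ T : Finset V, T ⊆ A → IndepOn G ↑T → S ⊆ T → S = T

open Classical in
/-- The finset of maximal independent subsets of `A`. -/
noncomputable def MIS (A : Finset V) : Finset (Finset V) :=
  A.powerset.filter (MI G A)

theorem mem_MIS {A S : Finset V} : S ∈ MIS G A ↔ MI G A S := by
  classical
  simp only [MIS, mem_filter, mem_powerset]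
  constructor
  · rintro ⟨-, h⟩
    convert h using 2
  · intro h
    refine ⟨h.1, ?_⟩
    convert h using 2

theorem indepOn_mono {S T : Set V} (h : IndepOn G T) (hST : S ⊆ T) : IndepOn G S :=
  Set.Pairwise.mono hST h

theorem NA_subset {A : Finset V} {v : V} (hv : v ∈ A) : NA G A v ⊆ A :=
  insert_subset hv (filter_subset _ _)

theorem mem_NA_self {A : Finset V} (v : V) : v ∈ NA G A v := mem_insert_self _ _

theorem NA_card {A : Finset V} (v : V) :
    (NA G A v).card = (A.filter (G.Adj v)).card + 1 := by
  rw [NA, card_insert_of_notMem]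
  simp [G.irrefl]

theorem hsymmG : Symmetric (fun a b : V => ¬ G.Adj a b) :=
  fun _ _ hab h => hab (G.adj_symm h)

/-- Moon–Moser: the number of maximal independent subsets of `A` is at most
`c A.card`. -/
theorem MIS_card_le (A : Finset V) : (MIS G A).card ≤ c A.card := by
  induction A using Finset.strongInduction with
  | _ A ih =>
    rcases A.eq_empty_or_nonempty with rfl | hA
    · have hsub : MIS G ∅ ⊆ {∅} := by
        intro S hS
        have h := (mem_MIS G).1 hS
        simp [subset_empty.1 h.1]
      have := card_le_card hsub
      simpa using this.trans (by norm_num [c])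
    · obtain ⟨v, hvA, hv⟩ := A.exists_min_image (fun u => (A.filter (G.Adj u)).card) hA
      set d := (A.filter (G.Adj v)).card with hd
      have cover : MIS G A ⊆ (NA G A v).biUnion
          (fun u => (MIS G (A \ NA G A u)).image (insert u)) := by
        intro S hS
        obtain ⟨hSA, hSind, hSmax⟩ := (mem_MIS G).1 hS
        have hex : ∃ u ∈ NA G A v, u ∈ S := by
          by_contra hno
          push_neg at hno
          have hvS : v ∉ S := fun h => hno v (mem_NA_self G v) h
          have hind : IndepOn G ↑(insert v S) := by
            rw [coe_insert]
            refine (haveI : Std.Symm (fun a b : V => ¬ G.Adj a b) := ⟨fun a b h => hsymmG G h⟩; Set.pairwise_insert_of_symm).2 ⟨hSind, ?_⟩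
            intro s hs _ hadj
            exact hno s (mem_insert_of_mem (mem_filter.2 ⟨hSA (Finset.mem_coe.1 hs), hadj⟩))
              (Finset.mem_coe.1 hs)
          have heq := hSmax (insert v S) (insert_subset hvA hSA) hind (subset_insert _ _)
          exact hvS (heq ▸ mem_insert_self v S)
        obtain ⟨u, huNA, huS⟩ := hex
        refine mem_biUnion.2 ⟨u, huNA, mem_image.2 ⟨S.erase u, ?_, insert_erase huS⟩⟩
        refine (mem_MIS G).2 ⟨?_, ?_, ?_⟩
        · intro s hs
          obtain ⟨hsu, hsS⟩ := mem_erase.1 hs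
          refine mem_sdiff.2 ⟨hSA hsS, fun hsNA => ?_⟩
          rcases mem_insert.1 hsNA with h | h
          · exact hsu h
          · exact hSind (Finset.mem_coe.2 huS) (Finset.mem_coe.2 hsS)
              (fun he => hsu he.symm) (mem_filter.1 h).2
        · exact indepOn_mono G hSind (Finset.coe_subset.2 (erase_subset _ _))
        · intro T hTsub hTind hST
          have huT : u ∉ T := fun h => (mem_sdiff.1 (hTsub h)).2 (mem_NA_self G u)
          have huA : u ∈ A := NA_subset G hvA huNA
          have hins : IndepOn G ↑(insert u T) := by
            rw [coe_insert]
            refine (haveI : Std.Symm (fun a b : V => ¬ G.Adj a b) := ⟨fun a b h => hsymmG G h⟩; Set.pairwise_insert_of_symm).2 ⟨hTind, ?_⟩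
            intro t ht _ hadj
            have htT := Finset.mem_coe.1 ht
            have := mem_sdiff.1 (hTsub htT)
            exact this.2 (mem_insert_of_mem (mem_filter.2 ⟨this.1, hadj⟩))
          have hsubA : insert u T ⊆ A :=
            insert_subset huA (hTsub.trans (sdiff_subset))
          have hSsub : S ⊆ insert u T := by
            intro s hsS
            by_cases hsu : s = u
            · exact hsu ▸ mem_insert_self _ _
            · exact mem_insert_of_mem (hST (mem_erase.2 ⟨hsu, hsS⟩))
          have heq : S = insert u T := hSmax _ hsubA hins hSsub
          rw [heq, erase_insert huT]
      have hNAsub : NA G A v ⊆ A := NA_subset G hvA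
      have hdlt : d < A.card := by
        have := card_le_card hNAsub
        rw [NA_card] at this
        omega
      have h3 : ∀ u ∈ NA G A v,
          ((MIS G (A \ NA G A u)).image (insert u)).card ≤ c (A.card - (d+1)) := by
        intro u huNA
        have huA : u ∈ A := hNAsub huNA
        have hssub : A \ NA G A u ⊂ A :=
          Finset.sdiff_ssubset (NA_subset G huA) ⟨u, mem_NA_self G u⟩
        have hcard : (A \ NA G A u).card ≤ A.card - (d+1) := by
          rw [card_sdiff_of_subset (NA_subset G huA), NA_card]
          have := hv u huA
          omega
        calc ((MIS G (A \ NA G A u)).image (insert u)).card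
            ≤ (MIS G (A \ NA G A u)).card := card_image_le
          _ ≤ c (A \ NA G A u).card := ih _ hssub
          _ ≤ c (A.card - (d+1)) := c_mono hcard
      calc (MIS G A).card
          ≤ ∑ u ∈ NA G A v, ((MIS G (A \ NA G A u)).image (insert u)).card :=
            (card_le_card cover).trans (card_biUnion_le)
        _ ≤ ∑ _u ∈ NA G A v, c (A.card - (d+1)) := sum_le_sum h3
        _ = (d+1) * c (A.card - (d+1)) := by rw [sum_const, smul_eq_mul, NA_card]
        _ ≤ c A.card := c_key d A.card hdlt

end
end MoonMoser

theorem stmt7 {V : Type*} [Fintype V] (G : SimpleGraph V) (n : ℕ)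
    (hcard : Fintype.card V = n) (h3 : 3 ∣ n) :
    Nat.card {S : Finset V // MaxIndep G S ∧ S.card = n / 3} ≤ 3 ^ (n / 3) := by
  classical
  obtain ⟨k, hk⟩ := h3
  have h1 : Nat.card {S : Finset V // MaxIndep G S ∧ S.card = n / 3}
      = (univ.filter (fun S : Finset V => MaxIndep G S ∧ S.card = n/3)).card := by
    rw [Nat.card_eq_fintype_card, Fintype.card_subtype]
  have h2 : (univ.filter (fun S : Finset V => MaxIndep G S ∧ S.card = n/3))
      ⊆ MoonMoser.MIS G univ := by
    intro S hS
    obtain ⟨hind, hmax⟩ := (mem_filter.1 hS).2.1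
    exact (MoonMoser.mem_MIS G).2 ⟨subset_univ S, hind, fun T _ hTind hST => hmax T hTind hST⟩
  have h4 : (univ : Finset V).card = n := by rw [Finset.card_univ, hcard]
  have h5 := MoonMoser.MIS_card_le G (univ : Finset V)
  rw [h4, hk, MoonMoser.c_three_mul k] at h5
  have h6 : n / 3 = k := by omega
  have h7 : (3:ℕ) ^ (n/3) = 3 ^ k := by rw [h6]
  rw [h1, h7]
  exact (card_le_card h2).trans h5
end

section
/- If n = 3k - 1 with k ≥ 1, then for every graph G on n vertices the number of maximal independent sets of size k is at most 2·3^(k-1). -/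
/-!
The Moon–Moser argument, by induction on the size `k` of the sets. Inside a vertex set `U`,
choose `v` whose closed neighbourhood `N[v]` in `U` has the least size `c`. Every maximal
independent set of `G[U]` meets `N[v]`, and deleting a vertex `u` from such a set yields a maximal
independent set, one smaller, of `G[U \ N[u]]`, a graph on at most `|U| - c` vertices. So the
counts satisfy `f_k(n) ≤ c · f_(k-1)(n - c)`, and the function `h` with `h(n + 3) = 3 h(n)`
(for `n ≥ 2`) dominates them because `s · h(m) ≤ h(m + s)`. Finally `h(3m + 2) = 2 · 3^m`.
-/

open Finset SimpleGraph

/-- By the Moon–Moser theorem, the largest number of maximal independent sets of an `n`-vertex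
graph. -/
def moonMoser : ℕ → ℕ
  | 0 => 1
  | 1 => 1
  | 2 => 2
  | 3 => 3
  | 4 => 4
  | n + 5 => 3 * moonMoser (n + 2)

lemma one_le_moonMoser : ∀ n, 1 ≤ moonMoser n
  | 0 | 1 | 2 | 3 | 4 => by decide
  | n + 5 => show 1 ≤ 3 * moonMoser (n + 2) by have := one_le_moonMoser (n + 2); omega

lemma moonMoser_le_succ : ∀ n, moonMoser n ≤ moonMoser (n + 1)
  | 0 | 1 | 2 | 3 | 4 => by decide
  | n + 5 => show 3 * moonMoser (n + 2) ≤ 3 * moonMoser (n + 3) from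
    Nat.mul_le_mul_left 3 (moonMoser_le_succ (n + 2))

lemma moonMoser_mono : Monotone moonMoser := monotone_nat_of_le_succ moonMoser_le_succ

lemma two_mul_moonMoser_le : ∀ n, 2 * moonMoser n ≤ moonMoser (n + 2)
  | 0 | 1 | 2 | 3 | 4 => by decide
  | n + 5 => show 2 * (3 * moonMoser (n + 2)) ≤ 3 * moonMoser (n + 4) from
    Nat.mul_left_comm 2 3 _ ▸ Nat.mul_le_mul_left 3 (two_mul_moonMoser_le (n + 2))

lemma three_mul_moonMoser_le : ∀ n, 3 * moonMoser n ≤ moonMoser (n + 3)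
  | 0 | 1 => by decide
  | n + 2 => le_rfl

lemma mul_moonMoser_le : ∀ s m, 1 ≤ s → s * moonMoser m ≤ moonMoser (m + s)
  | 1, m, _ => by simpa using moonMoser_le_succ m
  | 2, m, _ => two_mul_moonMoser_le m
  | 3, m, _ => three_mul_moonMoser_le m
  | s + 4, m, _ =>
    calc (s + 4) * moonMoser m ≤ 2 * ((s + 2) * moonMoser m) := by nlinarith
      _ ≤ 2 * moonMoser (m + (s + 2)) := by gcongr; exact mul_moonMoser_le (s + 2) m (by omega)
      _ ≤ moonMoser (m + (s + 4)) := two_mul_moonMoser_le _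

lemma moonMoser_three_mul_add_two (m : ℕ) : moonMoser (3 * m + 2) = 2 * 3 ^ m := by
  induction m with
  | zero => rfl
  | succ m ih =>
    rw [show 3 * (m + 1) + 2 = 3 * m + 5 by ring, moonMoser, ih]
    ring

section

open Classical

variable {V : Type*} (G : SimpleGraph V)

/-- `S` is a maximal independent set of the induced subgraph `G[U]`. -/
def IsMaxIndepWithin (U S : Finset V) : Prop :=
  S ⊆ U ∧ IndepOn G ↑S ∧ ∀ w ∈ U, w ∉ S → ∃ s ∈ S, G.Adj w s

noncomputable def maxIndepWithin (U : Finset V) (k : ℕ) : Finset (Finset V) :=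
  {S ∈ U.powerset | IsMaxIndepWithin G U S ∧ #S = k}

noncomputable def closedNbhdWithin (U : Finset V) (u : V) : Finset V :=
  {w ∈ U | w = u ∨ G.Adj u w}

variable {G}

lemma closedNbhdWithin_subset (U : Finset V) (u : V) : closedNbhdWithin G U u ⊆ U :=
  filter_subset _ _

lemma mem_maxIndepWithin {U S : Finset V} {k : ℕ} :
    S ∈ maxIndepWithin G U k ↔ IsMaxIndepWithin G U S ∧ #S = k := by
  simp only [maxIndepWithin, mem_filter, mem_powerset, and_iff_right_iff_imp]
  exact fun h => h.1.1

lemma IsMaxIndepWithin.exists_mem_closedNbhdWithin {U S : Finset V} (hS : IsMaxIndepWithin G U S)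
    {v : V} (hv : v ∈ U) : ∃ u ∈ closedNbhdWithin G U v, u ∈ S := by
  by_cases hvS : v ∈ S
  · exact ⟨v, by simp [closedNbhdWithin, hv], hvS⟩
  · obtain ⟨s, hs, hvs⟩ := hS.2.2 v hv hvS
    exact ⟨s, by simp [closedNbhdWithin, hS.1 hs, hvs], hs⟩

lemma IsMaxIndepWithin.erase {U S : Finset V} (hS : IsMaxIndepWithin G U S) {u : V}
    (hu : u ∈ S) : IsMaxIndepWithin G (U \ closedNbhdWithin G U u) (S.erase u) := by
  obtain ⟨hSU, hind, hmax⟩ := hS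
  refine ⟨fun s hs => ?_, hind.mono (by simp), fun w hw hwS => ?_⟩
  · obtain ⟨hsu, hs⟩ := mem_erase.mp hs
    simp [closedNbhdWithin, hSU hs, hsu, hind hu hs (Ne.symm hsu)]
  · simp only [closedNbhdWithin, mem_sdiff, mem_filter, not_and, not_or] at hw
    obtain ⟨hwU, hw⟩ := hw
    obtain ⟨hwu, hnadj⟩ := hw hwU
    obtain ⟨s, hs, hws⟩ := hmax w hwU (fun h => hwS (mem_erase.mpr ⟨hwu, h⟩))
    refine ⟨s, mem_erase.mpr ⟨?_, hs⟩, hws⟩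
    rintro rfl
    exact hnadj hws.symm

lemma card_filter_mem_maxIndepWithin_le (U : Finset V) (k : ℕ) (u : V) :
    #{S ∈ maxIndepWithin G U (k + 1) | u ∈ S}
      ≤ #(maxIndepWithin G (U \ closedNbhdWithin G U u) k) := by
  refine card_le_card_of_injOn (·.erase u) (fun S hS => ?_) (fun S hS T hT hST => ?_)
  · obtain ⟨hS, huS⟩ := mem_filter.mp hS
    obtain ⟨hS, hcard⟩ := mem_maxIndepWithin.mp hS
    exact mem_maxIndepWithin.mpr ⟨hS.erase huS, by rw [card_erase_of_mem huS, hcard]; rfl⟩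
  · rw [← insert_erase (mem_filter.mp hS).2, ← insert_erase (mem_filter.mp hT).2]
    exact congrArg (insert u) hST

theorem card_maxIndepWithin_le (k : ℕ) (U : Finset V) :
    #(maxIndepWithin G U k) ≤ moonMoser #U := by
  induction k generalizing U with
  | zero =>
    calc #(maxIndepWithin G U 0) ≤ #({∅} : Finset (Finset V)) :=
          card_le_card fun S hS => by simpa using (mem_maxIndepWithin.mp hS).2
      _ ≤ moonMoser #U := one_le_moonMoser _
  | succ k ih =>
    rcases U.eq_empty_or_nonempty with rfl | hU
    · simp [maxIndepWithin, filter_singleton]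
    obtain ⟨v, hvU, hvmin⟩ :=
      exists_min_image U (fun u => #(closedNbhdWithin G U u)) hU
    set c := #(closedNbhdWithin G U v)
    have hcU : c ≤ #U := card_le_card (closedNbhdWithin_subset U v)
    have hc : 1 ≤ c := card_pos.mpr ⟨v, by simp [closedNbhdWithin, hvU]⟩
    have hcover : maxIndepWithin G U (k + 1) ⊆ (closedNbhdWithin G U v).biUnion
        fun u => {S ∈ maxIndepWithin G U (k + 1) | u ∈ S} := fun S hS => by
      obtain ⟨u, hu, huS⟩ :=
        (mem_maxIndepWithin.mp hS).1.exists_mem_closedNbhdWithin hvU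
      exact mem_biUnion.mpr ⟨u, hu, mem_filter.mpr ⟨hS, huS⟩⟩
    have hbound : ∀ u ∈ closedNbhdWithin G U v,
        #{S ∈ maxIndepWithin G U (k + 1) | u ∈ S} ≤ moonMoser (#U - c) := fun u hu => by
      have hcu : c ≤ #(closedNbhdWithin G U u) := hvmin u (closedNbhdWithin_subset U v hu)
      calc #{S ∈ maxIndepWithin G U (k + 1) | u ∈ S}
          ≤ #(maxIndepWithin G (U \ closedNbhdWithin G U u) k) :=
            card_filter_mem_maxIndepWithin_le U k u
        _ ≤ moonMoser #(U \ closedNbhdWithin G U u) := ih _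
        _ ≤ moonMoser (#U - c) := by
          rw [card_sdiff_of_subset (closedNbhdWithin_subset U u)]
          exact moonMoser_mono (by omega)
    calc #(maxIndepWithin G U (k + 1)) ≤ c * moonMoser (#U - c) :=
          (card_le_card hcover).trans (card_biUnion_le_card_mul _ _ _ hbound)
      _ ≤ moonMoser (#U - c + c) := mul_moonMoser_le c _ hc
      _ = moonMoser #U := by rw [Nat.sub_add_cancel hcU]

lemma MaxIndep.isMaxIndepWithin_univ [Fintype V] {S : Finset V} (hS : MaxIndep G S) :
    IsMaxIndepWithin G univ S := by
  refine ⟨subset_univ S, hS.1, fun w _ hwS => ?_⟩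
  by_contra! hnadj
  have hind : IndepOn G ↑(insert w S) := by
    rw [coe_insert]
    exact hS.1.insert fun s hs _ => ⟨hnadj s hs, fun h => hnadj s hs h.symm⟩
  exact hwS (hS.2 _ hind (subset_insert w S) ▸ mem_insert_self w S)

end

theorem stmt8_general {V : Type*} [Fintype V] (G : SimpleGraph V) (n k : ℕ)
    (hcard : Fintype.card V = n) (hn : n + 1 = 3 * k) :
    Nat.card {S : Finset V // MaxIndep G S ∧ S.card = k} ≤ 2 * 3 ^ (k - 1) := by
  classical
  obtain ⟨m, rfl⟩ : ∃ m, k = m + 1 := ⟨k - 1, by omega⟩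
  calc Nat.card {S : Finset V // MaxIndep G S ∧ S.card = m + 1}
      ≤ #(maxIndepWithin G univ (m + 1)) := by
        rw [Nat.card_eq_fintype_card, Fintype.card_subtype]
        exact card_le_card fun S hS => mem_maxIndepWithin.mpr
          ⟨(mem_filter.mp hS).2.1.isMaxIndepWithin_univ, (mem_filter.mp hS).2.2⟩
    _ ≤ moonMoser (Fintype.card V) := card_maxIndepWithin_le (m + 1) univ
    _ = 2 * 3 ^ (m + 1 - 1) := by
        rw [hcard, show n = 3 * m + 2 by omega, moonMoser_three_mul_add_two, Nat.add_sub_cancel]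

theorem stmt8 {V : Type*} [Fintype V] (G : SimpleGraph V) (n k : ℕ)
    (hcard : Fintype.card V = n) (hk : 1 ≤ k) (hn : n + 1 = 3 * k) :
    Nat.card {S : Finset V // MaxIndep G S ∧ S.card = k} ≤ 2 * 3 ^ (k - 1) :=
  stmt8_general G n k hcard hn
end

section
/- If n = 3k + 1 with k ≥ 1, then for every graph G on n vertices the number of maximal independent sets of size k is at most 4·3^(k-1), and the number of maximal independent sets of size k+1 is also at most 4·3^(k-1). -/
open Finset SimpleGraph

/-- Moon–Moser bound function. -/
def M : ℕ → ℕ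
  | 0 => 1
  | 1 => 1
  | 2 => 2
  | 3 => 3
  | 4 => 4
  | (n+5) => 3 * M (n+2)

lemma M_pos : ∀ n, 0 < M n
  | 0 => by simp [M]
  | 1 => by simp [M]
  | 2 => by simp [M]
  | 3 => by simp [M]
  | 4 => by simp [M]
  | (n+5) => by simpa [M] using M_pos (n+2)

lemma M_le_succ : ∀ n, M n ≤ M (n+1)
  | 0 => by simp [M]
  | 1 => by simp [M]
  | 2 => by simp [M]
  | 3 => by simp [M]
  | 4 => by norm_num [M]
  | (n+5) => by
      have h : M (n+2) ≤ M (n+3) := M_le_succ (n+2)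
      show 3 * M (n+2) ≤ 3 * M (n+3)
      omega

lemma M_mono : Monotone M := monotone_nat_of_le_succ M_le_succ

lemma M_three_mul : ∀ m, 3 * M m ≤ M (m+3)
  | 0 => by simp [M]
  | 1 => by norm_num [M]
  | (m+2) => le_of_eq (by simp [M])

lemma M_two_mul : ∀ m, 2 * M m ≤ M (m+2)
  | 0 => by simp [M]
  | 1 => by norm_num [M]
  | 2 => by norm_num [M]
  | 3 => by norm_num [M]
  | 4 => by norm_num [M]
  | (m+5) => by
      have h : 2 * M (m+2) ≤ M (m+4) := M_two_mul (m+2)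
      show 2 * (3 * M (m+2)) ≤ 3 * M (m+4)
      omega

lemma M_four_mul : ∀ m, 4 * M m ≤ M (m+4)
  | 0 => by norm_num [M]
  | 1 => by norm_num [M]
  | 2 => by norm_num [M]
  | 3 => by norm_num [M]
  | 4 => by norm_num [M]
  | (m+5) => by
      have h : 4 * M (m+2) ≤ M (m+6) := M_four_mul (m+2)
      show 4 * (3 * M (m+2)) ≤ 3 * M (m+6)
      omega

lemma M_key : ∀ j, 1 ≤ j → ∀ m, j * M m ≤ M (m + j)
  | 1, _, m => by simpa using M_le_succ m
  | 2, _, m => M_two_mul m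
  | 3, _, m => M_three_mul m
  | 4, _, m => M_four_mul m
  | (j+5), _, m => by
      have h1 : (j+2) * M m ≤ M (m + (j+2)) := M_key (j+2) (by omega) m
      have h2 : 3 * M (m + (j+2)) ≤ M (m + (j+2) + 3) := M_three_mul _
      have hM : 0 < M m := M_pos m
      have : (j+5) * M m ≤ 3 * ((j+2) * M m) := by nlinarith
      calc (j+5) * M m ≤ 3 * ((j+2) * M m) := this
        _ ≤ 3 * M (m + (j+2)) := by omega
        _ ≤ M (m + (j+2) + 3) := h2
        _ = M (m + (j+5)) := by ring_nf

lemma M_val (k : ℕ) (hk : 1 ≤ k) : M (3 * k + 1) = 4 * 3 ^ (k - 1) := by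
  induction k with
  | zero => omega
  | succ k ih =>
    rcases Nat.eq_or_lt_of_le hk with h | h
    · norm_num [M, ← h]
    · have hk1 : 1 ≤ k := by omega
      have : 3 * (k+1) + 1 = (3 * k - 1) + 5 := by omega
      rw [this]
      have h2 : 3 * k - 1 + 2 = 3 * k + 1 := by omega
      rw [M, h2, ih hk1]
      have : k + 1 - 1 = (k - 1) + 1 := by omega
      rw [this, pow_succ]
      ring


universe u

/-- Key step: maximal independent sets containing `u` inject into maximal independent
sets of the graph induced on the complement of the closed neighborhood of `u`. -/
lemma key_step {V : Type u} [Fintype V] [DecidableEq V] (G : SimpleGraph V)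
    [DecidableRel G.Adj] (u : V) :
    Nat.card {S : Finset V // MaxIndep G S ∧ u ∈ S} ≤
      Nat.card {S : Finset {x : V // x ∉ insert u (G.neighborFinset u)} //
        MaxIndep (G.comap (Subtype.val)) S} := by
  classical
  rw [Nat.card_eq_fintype_card, Fintype.card_subtype]
  set A : Finset V := insert u (G.neighborFinset u) with hA
  set p : V → Prop := fun x => x ∉ A with hp
  set G' : SimpleGraph (Subtype p) := G.comap (Subtype.val) with hG'
  have hcard : Nat.card {S : Finset (Subtype p) // MaxIndep G' S}
      = (Finset.univ.filter fun S : Finset (Subtype p) => MaxIndep G' S).card := by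
    rw [Nat.card_eq_fintype_card, Fintype.card_subtype]
  rw [hcard]
  -- the injection
  set f : Finset V → Finset (Subtype p) := fun S => (S.erase u).subtype p with hf
  apply Finset.card_le_card_of_injOn f
  · -- maps into
    intro S hS
    simp only [Finset.mem_coe, Finset.mem_filter, Finset.mem_univ, true_and] at hS ⊢
    obtain ⟨⟨hind, hmax⟩, huS⟩ := hS
    -- members of S other than u are outside A
    have hout : ∀ w ∈ S, w ≠ u → p w := by
      intro w hw hwu
      simp only [hp, hA, Finset.mem_insert, mem_neighborFinset]
      push_neg
      refine ⟨hwu, fun hadj => ?_⟩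
      exact hind huS hw (Ne.symm hwu) hadj |>.elim
    have hmemf : ∀ x : Subtype p, x ∈ f S ↔ (x : V) ∈ S := by
      intro x
      simp only [hf, Finset.mem_subtype, Finset.mem_erase]
      constructor
      · exact fun h => h.2
      · intro h
        refine ⟨fun hxu => ?_, h⟩
        have := x.2
        rw [hxu] at this
        exact this (Finset.mem_insert_self _ _)
    constructor
    · -- independence
      intro a ha b hb hab hadj
      simp only [Finset.coe_sort_coe, Finset.mem_coe] at ha hb
      rw [hmemf] at ha hb
      have : (a : V) ≠ (b : V) := fun h => hab (Subtype.ext h)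
      exact hind ha hb this hadj
    · -- maximality
      intro T hT hsub
      have hTout : ∀ x : Subtype p, x ∈ T → ¬ G.Adj u (x : V) := by
        intro x _ hadj
        exact x.2 (by simp [hA, mem_neighborFinset, hadj])
      set T₀ : Finset V := insert u (T.map (Function.Embedding.subtype p)) with hT₀
      have hmemT₀ : ∀ w : V, w ∈ T₀ ↔ w = u ∨ ∃ h : p w, (⟨w, h⟩ : Subtype p) ∈ T := by
        intro w
        simp only [hT₀, Finset.mem_insert, Finset.mem_map, Function.Embedding.coe_subtype]
        constructor
        · rintro (h | ⟨a, ha, rfl⟩)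
          · exact Or.inl h
          · exact Or.inr ⟨a.2, by simpa using ha⟩
        · rintro (h | ⟨h, ht⟩)
          · exact Or.inl h
          · exact Or.inr ⟨⟨w, h⟩, ht, rfl⟩
      have hT₀ind : IndepOn G ↑T₀ := by
        intro a ha b hb hab hadj
        simp only [Finset.coe_sort_coe, Finset.mem_coe] at ha hb
        rw [hmemT₀] at ha hb
        rcases ha with rfl | ⟨hpa, hta⟩
        · rcases hb with rfl | ⟨hpb, htb⟩
          · exact hab rfl
          · exact hTout _ htb hadj
        · rcases hb with rfl | ⟨hpb, htb⟩
          · exact hTout _ hta hadj.symm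
          · exact hT hta htb (fun h => hab (congrArg Subtype.val h)) hadj
      have hST₀ : S ⊆ T₀ := by
        intro w hw
        rw [hmemT₀]
        by_cases hwu : w = u
        · exact Or.inl hwu
        · refine Or.inr ⟨hout w hw hwu, hsub ?_⟩
          rw [hmemf]
          exact hw
      have hSeq : S = T₀ := hmax T₀ hT₀ind hST₀
      apply Finset.Subset.antisymm hsub
      intro x hx
      rw [hmemf]
      rw [hSeq, hmemT₀]
      exact Or.inr ⟨x.2, hx⟩
  · -- injectivity
    intro S₁ h₁ S₂ h₂ hf12
    simp only [Finset.coe_filter, Set.mem_setOf_eq, Finset.mem_univ, true_and] at h₁ h₂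
    have recover : ∀ S : Finset V, MaxIndep G S ∧ u ∈ S →
        S = insert u ((f S).map (Function.Embedding.subtype p)) := by
      rintro S ⟨⟨hind, _⟩, huS⟩
      ext w
      simp only [Finset.mem_insert, Finset.mem_map, Function.Embedding.coe_subtype,
        hf, Finset.mem_subtype, Finset.mem_erase]
      constructor
      · intro hw
        by_cases hwu : w = u
        · exact Or.inl hwu
        · have hpw : p w := by
            simp only [hp, hA, Finset.mem_insert, mem_neighborFinset]
            push_neg
            exact ⟨hwu, fun hadj => (hind huS hw (Ne.symm hwu) hadj).elim⟩
          exact Or.inr ⟨⟨w, hpw⟩, ⟨hwu, hw⟩, rfl⟩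
      · rintro (rfl | ⟨a, ⟨_, ha⟩, rfl⟩)
        · exact huS
        · exact ha
    rw [recover S₁ h₁, recover S₂ h₂, hf12]

/-- Moon–Moser: the number of maximal independent sets is at most `M n`. -/
lemma mis_total_bound (n : ℕ) : ∀ (V : Type u) [Fintype V] (G : SimpleGraph V),
    Fintype.card V = n → Nat.card {S : Finset V // MaxIndep G S} ≤ M n := by
  induction n using Nat.strong_induction_on with
  | _ n IH =>
  intro V _ G hV
  classical
  rcases Nat.eq_zero_or_pos n with rfl | hn
  · -- no vertices: at most one subset
    have hempty : IsEmpty V := Fintype.card_eq_zero_iff.mp hV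
    have : Subsingleton (Finset V) := by
      constructor
      intro a b
      ext x
      exact (hempty.false x).elim
    have : Subsingleton {S : Finset V // MaxIndep G S} := by
      constructor; intro a b; exact Subtype.ext (Subsingleton.elim _ _)
    rw [Nat.card_eq_fintype_card]
    calc Fintype.card {S : Finset V // MaxIndep G S} ≤ 1 :=
        Fintype.card_le_one_iff_subsingleton.mpr this
      _ = M 0 := by simp [M]
  · -- pick a vertex of minimum degree
    have hne : Nonempty V := Fintype.card_pos_iff.mp (hV ▸ hn)
    obtain ⟨x⟩ := hne
    obtain ⟨v, -, hv⟩ := Finset.exists_min_image Finset.univ (fun u => G.degree u)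
      ⟨x, Finset.mem_univ x⟩
    set d := G.degree v with hd
    set Av : Finset V := insert v (G.neighborFinset v) with hAv
    have hAvcard : Av.card = d + 1 := by
      rw [hAv, Finset.card_insert_of_notMem (notMem_neighborFinset_self G v),
        card_neighborFinset_eq_degree]
    -- every maximal independent set meets Av
    have hmeet : ∀ S : Finset V, MaxIndep G S → ∃ u ∈ Av, u ∈ S := by
      intro S ⟨hind, hmax⟩
      by_contra h
      push_neg at h
      have hvS : v ∉ S := h v (Finset.mem_insert_self _ _)
      have hindT : IndepOn G ↑(insert v S) := by
        intro a ha b hb hab hadj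
        simp only [Finset.coe_insert, Set.mem_insert_iff, Finset.mem_coe] at ha hb
        rcases ha with rfl | ha
        · rcases hb with rfl | hb
          · exact hab rfl
          · exact h b (by simp [hAv, mem_neighborFinset, hadj]) hb
        · rcases hb with rfl | hb
          · exact h a (by simp [hAv, mem_neighborFinset, hadj.symm]) ha
          · exact hind ha hb hab hadj
      have := hmax _ hindT (Finset.subset_insert _ _)
      exact hvS (this ▸ Finset.mem_insert_self v S)
    -- counting
    rw [Nat.card_eq_fintype_card, Fintype.card_subtype]
    have hsub : (Finset.univ.filter fun S : Finset V => MaxIndep G S) ⊆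
        Av.biUnion (fun u => Finset.univ.filter fun S : Finset V => MaxIndep G S ∧ u ∈ S) := by
      intro S hS
      simp only [Finset.mem_filter, Finset.mem_univ, true_and] at hS
      obtain ⟨u, hu, huS⟩ := hmeet S hS
      simp only [Finset.mem_biUnion, Finset.mem_filter, Finset.mem_univ, true_and]
      exact ⟨u, hu, hS, huS⟩
    have step1 := Finset.card_le_card hsub
    have step2 := Finset.card_biUnion_le (s := Av)
      (t := fun u => Finset.univ.filter fun S : Finset V => MaxIndep G S ∧ u ∈ S)
    -- per-vertex bound
    have step3 : ∀ u ∈ Av,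
        (Finset.univ.filter fun S : Finset V => MaxIndep G S ∧ u ∈ S).card ≤ M (n - (d + 1)) := by
      intro u _
      have h1 : (Finset.univ.filter fun S : Finset V => MaxIndep G S ∧ u ∈ S).card
          = Nat.card {S : Finset V // MaxIndep G S ∧ u ∈ S} := by
        rw [Nat.card_eq_fintype_card, Fintype.card_subtype]
      rw [h1]
      have h2 := key_step G u
      set W := {x : V // x ∉ insert u (G.neighborFinset u)}
      have hWcard : Fintype.card W = n - (G.degree u + 1) := by
        rw [Fintype.card_subtype_compl, hV]
        congr 1
        have : Fintype.card {x : V // x ∈ insert u (G.neighborFinset u)}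
            = (insert u (G.neighborFinset u)).card := Fintype.card_coe _
        rw [this, Finset.card_insert_of_notMem (notMem_neighborFinset_self G u),
          card_neighborFinset_eq_degree]
      have h3 : Nat.card {S : Finset W // MaxIndep (G.comap Subtype.val) S}
          ≤ M (n - (G.degree u + 1)) := by
        apply IH (n - (G.degree u + 1)) _ W _ hWcard
        have : 0 < G.degree u + 1 := Nat.succ_pos _
        omega
      have h4 : M (n - (G.degree u + 1)) ≤ M (n - (d + 1)) := by
        apply M_mono
        have := hv u (Finset.mem_univ u)
        omega
      exact le_trans h2 (le_trans h3 h4)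
    have step4 : (Av.biUnion (fun u =>
          Finset.univ.filter fun S : Finset V => MaxIndep G S ∧ u ∈ S)).card
        ≤ (d + 1) * M (n - (d + 1)) := by
      calc _ ≤ ∑ u ∈ Av, (Finset.univ.filter fun S : Finset V => MaxIndep G S ∧ u ∈ S).card :=
            step2
        _ ≤ ∑ _u ∈ Av, M (n - (d + 1)) := Finset.sum_le_sum step3
        _ = (d + 1) * M (n - (d + 1)) := by rw [Finset.sum_const, hAvcard, smul_eq_mul]
    have hdn : d + 1 ≤ n := by
      have h := Finset.card_le_univ Av
      rw [hAvcard] at h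
      have h2 : (Finset.univ : Finset V).card = n := by rw [Finset.card_univ, hV]
      omega
    have step5 : (d + 1) * M (n - (d + 1)) ≤ M n := by
      have := M_key (d + 1) (Nat.succ_pos d) (n - (d + 1))
      have heq : n - (d + 1) + (d + 1) = n := Nat.sub_add_cancel hdn
      rwa [heq] at this
    omega

theorem stmt9 {V : Type*} [Fintype V] (G : SimpleGraph V) (n k : ℕ)
    (hcard : Fintype.card V = n) (hk : 1 ≤ k) (hn : n = 3 * k + 1) :
    Nat.card {S : Finset V // MaxIndep G S ∧ S.card = k} ≤ 4 * 3 ^ (k - 1) ∧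
    Nat.card {S : Finset V // MaxIndep G S ∧ S.card = k + 1} ≤ 4 * 3 ^ (k - 1) := by
  classical
  have htot : Nat.card {S : Finset V // MaxIndep G S} ≤ 4 * 3 ^ (k - 1) := by
    have := mis_total_bound n V G hcard
    rwa [hn, M_val k hk] at this
  have hbound : ∀ (P : Finset V → Prop),
      Nat.card {S : Finset V // MaxIndep G S ∧ P S} ≤ Nat.card {S : Finset V // MaxIndep G S} := by
    intro P
    apply Nat.card_le_card_of_injective
      (fun x : {S : Finset V // MaxIndep G S ∧ P S} => (⟨x.1, x.2.1⟩ : {S // MaxIndep G S}))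
    intro a b hab
    simp only [Subtype.mk.injEq] at hab
    exact Subtype.ext hab
  exact ⟨le_trans (hbound _) htot, le_trans (hbound _) htot⟩
end
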